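/- Let n ≥ 2 and let I₁,…,I_n, B₁,…,B_n, C₁,…,C_{n−1} be real constants with I_i + I_n > 0 for i = 1,…,n−1. On ℝ^{n−1} × ℝ^{n−1} with canonical coordinates (q₁,…,q_{n−1}, p₁,…,p_{n−1}) define H*(q,p) = ½ Σ_{i=1}^{n−1} p_i²/(I_i+I_n) + Σ_{i=1}^{n−1} C_i q_i + ½ Σ_{i=1}^{n−1} (B_i − B_n) q_i², and f_i(q,p) = p_i² + 2C_i(I_i+I_n)q_i + (I_i+I_n)(B_i−B_n)q_i² for i = 1,…,n−1. Then, with respect to the canonical Poisson bracket {f,g} = Σ_k (∂f/∂q_k · ∂g/∂p_k − ∂f/∂p_k · ∂g/∂q_k), one has {f_i, f_j} = 0 for all i, j and {f_i, H*} = 0 for all i; consequently each f_i is constant along every solution of Hamilton's equations q̇_k = ∂H*/∂p_k, ṗ_k = −∂H*/∂q_k. -/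

import Mathlib

open Matrix

/-- The canonical Poisson bracket
`{f,g} = Σ_k (∂f/∂q_k · ∂g/∂p_k − ∂f/∂p_k · ∂g/∂q_k)` on `ℝᵐ{q} × ℝᵐ{p}`. -/
noncomputable def pbracket {m : ℕ} (f g : ((Fin m → ℝ) × (Fin m → ℝ)) → ℝ)
    (x : (Fin m → ℝ) × (Fin m → ℝ)) : ℝ :=
  ∑ k : Fin m,
    (fderiv ℝ f x (Pi.single k 1, 0) * fderiv ℝ g x (0, Pi.single k 1) -
      fderiv ℝ f x (0, Pi.single k 1) * fderiv ℝ g x (Pi.single k 1, 0))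

/-- `I_i + I_n` for `i = 1, …, n−1`. -/
def Kconst (n : ℕ) (hn : 2 ≤ n) (Ic : Fin n → ℝ) (i : Fin (n - 1)) : ℝ :=
  Ic (Fin.castLE (Nat.sub_le n 1) i) + Ic ⟨n - 1, by omega⟩

/-- `B_i − B_n` for `i = 1, …, n−1`. -/
def Bdiff (n : ℕ) (hn : 2 ≤ n) (B : Fin n → ℝ) (i : Fin (n - 1)) : ℝ :=
  B (Fin.castLE (Nat.sub_le n 1) i) - B ⟨n - 1, by omega⟩

/-- The Hamiltonian (equation (20) of the paper)
`H* = ½ Σ p_i²/(I_i+I_n) + Σ C_i q_i + ½ Σ (B_i−B_n) q_i²`. -/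
noncomputable def Hstar (n : ℕ) (hn : 2 ≤ n) (Ic B : Fin n → ℝ) (C : Fin (n - 1) → ℝ)
    (x : (Fin (n - 1) → ℝ) × (Fin (n - 1) → ℝ)) : ℝ :=
  (1 / 2) * ∑ i, x.2 i ^ 2 / Kconst n hn Ic i + ∑ i, C i * x.1 i +
    (1 / 2) * ∑ i, Bdiff n hn B i * x.1 i ^ 2

/-- The integrals `f_i = p_i² + 2C_i(I_i+I_n)q_i + (I_i+I_n)(B_i−B_n)q_i²`. -/
def fint (n : ℕ) (hn : 2 ≤ n) (Ic B : Fin n → ℝ) (C : Fin (n - 1) → ℝ) (i : Fin (n - 1))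
    (x : (Fin (n - 1) → ℝ) × (Fin (n - 1) → ℝ)) : ℝ :=
  x.2 i ^ 2 + 2 * C i * Kconst n hn Ic i * x.1 i +
    Kconst n hn Ic i * Bdiff n hn B i * x.1 i ^ 2

/-!
`H*` is a sum `Σ_k h_k` of quadratics `h_k` in the single degree of freedom `(q_k, p_k)`, and
`f_i = 2 (I_i + I_n) h_i`. Functions of disjoint degrees of freedom Poisson-commute, so
`{f_i, f_j} = 0` for `i ≠ j` and `{f_i, H*} = 2 (I_i + I_n) {h_i, h_i} = 0`. Along a solution of
Hamilton's equations every function `f` evolves by `ḟ = {f, H*}`, so the `f_i` are conserved.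
-/

section PhaseSpace

variable {m : ℕ}

theorem ContinuousLinearMap.apply_prod_eq_sum (L : ((Fin m → ℝ) × (Fin m → ℝ)) →L[ℝ] ℝ)
    (v w : Fin m → ℝ) :
    L (v, w) = ∑ k, (v k * L (Pi.single k 1, 0) + w k * L (0, Pi.single k 1)) := by
  have hvw : (v, w) = ∑ k, (v k • ((Pi.single k 1 : Fin m → ℝ), (0 : Fin m → ℝ)) +
      w k • ((0 : Fin m → ℝ), (Pi.single k 1 : Fin m → ℝ))) := by
    ext j <;> simp [Prod.fst_sum, Prod.snd_sum, Finset.sum_apply, Pi.single_apply]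
  conv_lhs => rw [hvw]
  simp only [map_sum, map_add, map_smul, smul_eq_mul]

theorem pbracket_self (f : ((Fin m → ℝ) × (Fin m → ℝ)) → ℝ) (x : (Fin m → ℝ) × (Fin m → ℝ)) :
    pbracket f f x = 0 :=
  Finset.sum_eq_zero fun _ _ => by ring

theorem hasDerivAt_pbracket_of_hamiltonEqs {f H : ((Fin m → ℝ) × (Fin m → ℝ)) → ℝ}
    {q p : ℝ → Fin m → ℝ} {t : ℝ} (hf : DifferentiableAt ℝ f (q t, p t))
    (hq : HasDerivAt q (fun k => fderiv ℝ H (q t, p t) (0, Pi.single k 1)) t)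
    (hp : HasDerivAt p (fun k => -fderiv ℝ H (q t, p t) (Pi.single k 1, 0)) t) :
    HasDerivAt (fun t => f (q t, p t)) (pbracket f H (q t, p t)) t := by
  refine (hf.hasFDerivAt.comp_hasDerivAt t (hq.prodMk hp)).congr_deriv ?_
  rw [ContinuousLinearMap.apply_prod_eq_sum, pbracket]
  exact Finset.sum_congr rfl fun k _ => by ring

theorem eq_of_pbracket_eq_zero_of_hamiltonEqs {f H : ((Fin m → ℝ) × (Fin m → ℝ)) → ℝ}
    (hf : Differentiable ℝ f) (hfH : ∀ x, pbracket f H x = 0) {q p : ℝ → Fin m → ℝ}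
    (hq : ∀ t, HasDerivAt q (fun k => fderiv ℝ H (q t, p t) (0, Pi.single k 1)) t)
    (hp : ∀ t, HasDerivAt p (fun k => -fderiv ℝ H (q t, p t) (Pi.single k 1, 0)) t)
    (t₁ t₂ : ℝ) : f (q t₁, p t₁) = f (q t₂, p t₂) := by
  have hderiv t : HasDerivAt (fun t => f (q t, p t)) 0 t := by
    simpa only [hfH] using hasDerivAt_pbracket_of_hamiltonEqs (hf _) (hq t) (hp t)
  exact is_const_of_deriv_eq_zero (fun t => (hderiv t).differentiableAt)
    (fun t => (hderiv t).deriv) t₁ t₂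

def coordQuadratic (i : Fin m) (a b c : ℝ) (x : (Fin m → ℝ) × (Fin m → ℝ)) : ℝ :=
  a * x.2 i ^ 2 + b * x.1 i + c * x.1 i ^ 2

def separableQuadratic (a b c : Fin m → ℝ) (x : (Fin m → ℝ) × (Fin m → ℝ)) : ℝ :=
  ∑ k, coordQuadratic k (a k) (b k) (c k) x

theorem hasFDerivAt_coordQuadratic (i : Fin m) (a b c : ℝ) (x : (Fin m → ℝ) × (Fin m → ℝ)) :
    HasFDerivAt (coordQuadratic i a b c)
      ((2 * a * x.2 i) • ((ContinuousLinearMap.proj i).comp (ContinuousLinearMap.snd ℝ _ _)) +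
        (b + 2 * c * x.1 i) •
          ((ContinuousLinearMap.proj i).comp (ContinuousLinearMap.fst ℝ _ _))) x := by
  have hq : HasFDerivAt (fun y : (Fin m → ℝ) × (Fin m → ℝ) => y.1 i)
      ((ContinuousLinearMap.proj i).comp (ContinuousLinearMap.fst ℝ _ _)) x :=
    ((ContinuousLinearMap.proj i).comp (ContinuousLinearMap.fst ℝ _ _)).hasFDerivAt (x := x)
  have hp : HasFDerivAt (fun y : (Fin m → ℝ) × (Fin m → ℝ) => y.2 i)
      ((ContinuousLinearMap.proj i).comp (ContinuousLinearMap.snd ℝ _ _)) x :=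
    ((ContinuousLinearMap.proj i).comp (ContinuousLinearMap.snd ℝ _ _)).hasFDerivAt (x := x)
  refine ((((hp.pow 2).const_mul a).add (hq.const_mul b)).add
    ((hq.pow 2).const_mul c)).congr_fderiv ?_
  ext v <;> simp <;> ring

theorem fderiv_coordQuadratic_q (i k : Fin m) (a b c : ℝ) (x : (Fin m → ℝ) × (Fin m → ℝ)) :
    fderiv ℝ (coordQuadratic i a b c) x (Pi.single k 1, 0) =
      Pi.single (M := fun _ => ℝ) i (b + 2 * c * x.1 i) k := by
  rw [(hasFDerivAt_coordQuadratic i a b c x).fderiv]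
  simp [Pi.single_apply, eq_comm]

theorem fderiv_coordQuadratic_p (i k : Fin m) (a b c : ℝ) (x : (Fin m → ℝ) × (Fin m → ℝ)) :
    fderiv ℝ (coordQuadratic i a b c) x (0, Pi.single k 1) =
      Pi.single (M := fun _ => ℝ) i (2 * a * x.2 i) k := by
  rw [(hasFDerivAt_coordQuadratic i a b c x).fderiv]
  simp [Pi.single_apply, eq_comm]

theorem pbracket_coordQuadratic (i : Fin m) (a b c : ℝ) (g : ((Fin m → ℝ) × (Fin m → ℝ)) → ℝ)
    (x : (Fin m → ℝ) × (Fin m → ℝ)) :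
    pbracket (coordQuadratic i a b c) g x =
      (b + 2 * c * x.1 i) * fderiv ℝ g x (0, Pi.single i 1) -
        2 * a * x.2 i * fderiv ℝ g x (Pi.single i 1, 0) := by
  simp [pbracket, fderiv_coordQuadratic_q, fderiv_coordQuadratic_p, Pi.single_apply,
    Finset.sum_sub_distrib, ite_mul]

theorem pbracket_coordQuadratic_of_ne {i j : Fin m} (hij : i ≠ j) (a b c a' b' c' : ℝ)
    (x : (Fin m → ℝ) × (Fin m → ℝ)) :
    pbracket (coordQuadratic i a b c) (coordQuadratic j a' b' c') x = 0 := by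
  simp [pbracket_coordQuadratic, fderiv_coordQuadratic_q, fderiv_coordQuadratic_p, hij]

theorem differentiable_coordQuadratic (i : Fin m) (a b c : ℝ) :
    Differentiable ℝ (coordQuadratic i a b c) :=
  fun x => (hasFDerivAt_coordQuadratic i a b c x).differentiableAt

theorem fderiv_separableQuadratic (a b c : Fin m → ℝ) (x : (Fin m → ℝ) × (Fin m → ℝ)) :
    fderiv ℝ (separableQuadratic a b c) x =
      ∑ k, fderiv ℝ (coordQuadratic k (a k) (b k) (c k)) x :=
  fderiv_fun_sum fun k _ => differentiable_coordQuadratic k (a k) (b k) (c k) x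

theorem fderiv_separableQuadratic_q (a b c : Fin m → ℝ) (k : Fin m)
    (x : (Fin m → ℝ) × (Fin m → ℝ)) :
    fderiv ℝ (separableQuadratic a b c) x (Pi.single k 1, 0) = b k + 2 * c k * x.1 k := by
  simp [fderiv_separableQuadratic, fderiv_coordQuadratic_q, Pi.single_apply]

theorem fderiv_separableQuadratic_p (a b c : Fin m → ℝ) (k : Fin m)
    (x : (Fin m → ℝ) × (Fin m → ℝ)) :
    fderiv ℝ (separableQuadratic a b c) x (0, Pi.single k 1) = 2 * a k * x.2 k := by
  simp [fderiv_separableQuadratic, fderiv_coordQuadratic_p, Pi.single_apply]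

theorem pbracket_coordQuadratic_separableQuadratic (a b c : Fin m → ℝ) (i : Fin m) (r : ℝ)
    (x : (Fin m → ℝ) × (Fin m → ℝ)) :
    pbracket (coordQuadratic i (r * a i) (r * b i) (r * c i)) (separableQuadratic a b c) x = 0 := by
  rw [pbracket_coordQuadratic, fderiv_separableQuadratic_q, fderiv_separableQuadratic_p]
  ring

end PhaseSpace

theorem fint_eq_coordQuadratic {n : ℕ} {hn : 2 ≤ n} {Ic : Fin n → ℝ} (B : Fin n → ℝ)
    (C : Fin (n - 1) → ℝ) {i : Fin (n - 1)} (hK : Kconst n hn Ic i ≠ 0) :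
    fint n hn Ic B C i =
      coordQuadratic i (2 * Kconst n hn Ic i * (2 * Kconst n hn Ic i)⁻¹)
        (2 * Kconst n hn Ic i * C i) (2 * Kconst n hn Ic i * (Bdiff n hn B i / 2)) := by
  funext x
  simp only [fint, coordQuadratic]
  field_simp

theorem Hstar_eq_separableQuadratic (n : ℕ) (hn : 2 ≤ n) (Ic B : Fin n → ℝ)
    (C : Fin (n - 1) → ℝ) :
    Hstar n hn Ic B C =
      separableQuadratic (fun k => (2 * Kconst n hn Ic k)⁻¹) C (fun k => Bdiff n hn B k / 2) := by
  funext x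
  simp only [Hstar, separableQuadratic, coordQuadratic, Finset.mul_sum, ← Finset.sum_add_distrib]
  refine Finset.sum_congr rfl fun k _ => ?_
  ring

theorem suslov_quadratic_integrals (n : ℕ) (hn : 2 ≤ n) (Ic B : Fin n → ℝ)
    (C : Fin (n - 1) → ℝ)
    (hI : ∀ i : Fin (n - 1), 0 < Kconst n hn Ic i) :
    (∀ i j : Fin (n - 1), ∀ x,
      pbracket (fint n hn Ic B C i) (fint n hn Ic B C j) x = 0) ∧
    (∀ i : Fin (n - 1), ∀ x,
      pbracket (fint n hn Ic B C i) (Hstar n hn Ic B C) x = 0) ∧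
    (∀ q p : ℝ → Fin (n - 1) → ℝ,
      (∀ t : ℝ, HasDerivAt q
        (fun k => fderiv ℝ (Hstar n hn Ic B C) (q t, p t) (0, Pi.single k 1)) t) →
      (∀ t : ℝ, HasDerivAt p
        (fun k => -fderiv ℝ (Hstar n hn Ic B C) (q t, p t) (Pi.single k 1, 0)) t) →
      ∀ i : Fin (n - 1), ∀ t₁ t₂ : ℝ,
        fint n hn Ic B C i (q t₁, p t₁) = fint n hn Ic B C i (q t₂, p t₂)) := by
  have hfint i := fint_eq_coordQuadratic B C (hI i).ne'
  have hfH i x : pbracket (fint n hn Ic B C i) (Hstar n hn Ic B C) x = 0 := by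
    rw [hfint i, Hstar_eq_separableQuadratic]
    exact pbracket_coordQuadratic_separableQuadratic (fun k => (2 * Kconst n hn Ic k)⁻¹) C
      (fun k => Bdiff n hn B k / 2) i (2 * Kconst n hn Ic i) x
  refine ⟨fun i j x => ?_, hfH, fun q p hq hp i => ?_⟩
  · rcases eq_or_ne i j with rfl | hij
    · exact pbracket_self _ x
    · rw [hfint i, hfint j]
      exact pbracket_coordQuadratic_of_ne hij ..
  · refine eq_of_pbracket_eq_zero_of_hamiltonEqs ?_ (hfH i) hq hp
    rw [hfint i]
    exact differentiable_coordQuadratic _ _ _ _
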